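/- arXiv:1704.05139 — 4 statements merged into one kernel-verified Lean document; each statement's English description precedes it below -/
import Mathlib

section
/- Fix j with 1 ≤ j ≤ m. Then the function z ↦ φ″(z)/φ(z) − r_j(r_j+1)/(z−y_j)² − H_j/(z−y_j), defined on a punctured neighbourhood of y_j, extends to a function analytic on a full neighbourhood of y_j, where H_j = −2 r_j ( ∑_{k=1}^n 1/(y_j−x_k) + ∑_{i=1, i≠j}^m r_i/(y_i−y_j) ). That is, the potential u = φ″/φ has a double pole at y_j with quadratic residue r_j(r_j+1) and first-order coefficient (accessory parameter) H_j. -/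
open Filter Topology Finset

/-!
Near `y_j` write `φ = ψ / (z - y_j) ^ r_j` with `ψ` analytic and nonvanishing at `y_j`.
Leibniz' rule gives
`φ''/φ = ψ''/ψ - 2 r_j (ψ'/ψ)(z) / (z - y_j) + r_j (r_j + 1) / (z - y_j)²`,
so subtracting the double pole and `-2 r_j (ψ'/ψ)(y_j) / (z - y_j)` leaves
`ψ''/ψ - 2 r_j · dslope (ψ'/ψ) y_j`, which is analytic at `y_j`. Finally the logarithmic
derivative of `ψ = ∏ₖ (z - x_k) / ∏_{i ≠ j} (z - y_i)^{r_i}` at `y_j` is `-H_j / (2 r_j)`.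
-/

section

variable {𝕜 : Type*} [NontriviallyNormedField 𝕜]

theorem AnalyticAt.dslope {E : Type*} [NormedAddCommGroup E] [NormedSpace 𝕜 E] {f : 𝕜 → E}
    {c : 𝕜} (hf : AnalyticAt 𝕜 f c) : AnalyticAt 𝕜 (dslope f c) c :=
  let ⟨_, hp⟩ := hf
  ⟨_, hp.has_fpower_series_dslope_fslope⟩

theorem iteratedDeriv_sub_const_zpow (c z : 𝕜) (m : ℤ) (k : ℕ) :
    iteratedDeriv k (fun w => (w - c) ^ m) z
      = (∏ i ∈ range k, ((m : 𝕜) - i)) * (z - c) ^ (m - k) := by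
  rw [iteratedDeriv_comp_sub_const (f := fun w : 𝕜 => w ^ m), iteratedDeriv_eq_iterate]
  exact iter_deriv_zpow m (z - c) k

theorem logDeriv_prod_sub_pow {ι : Type*} (t : Finset ι) (a : ι → 𝕜) (r : ι → ℕ)
    {c : 𝕜} (hc : ∀ i ∈ t, c ≠ a i) :
    logDeriv (fun z => ∏ i ∈ t, (z - a i) ^ r i) c = ∑ i ∈ t, r i / (c - a i) := by
  rw [logDeriv_prod (f := fun i z => (z - a i) ^ r i)
    (fun i hi => pow_ne_zero _ (sub_ne_zero.mpr (hc i hi)))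
    (fun i _ => (differentiableAt_id.sub_const _).pow _)]
  refine sum_congr rfl fun i _ => ?_
  rw [logDeriv_fun_pow (differentiableAt_id.sub_const _), logDeriv_apply]
  simp [div_eq_mul_inv]

variable [CompleteSpace 𝕜]

theorem iteratedDeriv_two_div_sub_pow_div {ψ : 𝕜 → 𝕜} {c z : 𝕜} (s : ℕ)
    (hψ : ContDiffAt 𝕜 2 ψ z) (hz : z ≠ c) (hψz : ψ z ≠ 0) :
    iteratedDeriv 2 (fun w => ψ w / (w - c) ^ s) z / (ψ z / (z - c) ^ s)
      = iteratedDeriv 2 ψ z / ψ z - 2 * s * logDeriv ψ z / (z - c)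
        + s * (s + 1) / (z - c) ^ 2 := by
  have hzc : z - c ≠ 0 := sub_ne_zero.mpr hz
  have hfun : (fun w => ψ w / (w - c) ^ s) = ψ * fun w => (w - c) ^ (-s : ℤ) := by
    funext w; simp [zpow_neg, div_eq_mul_inv]
  have hpow : ContDiffAt 𝕜 2 (fun w => (w - c) ^ (-s : ℤ)) z :=
    ((analyticAt_id.sub analyticAt_const).zpow hzc).contDiffAt
  rw [hfun, iteratedDeriv_mul hψ hpow]
  simp only [iteratedDeriv_sub_const_zpow, sum_range_succ, prod_range_succ, range_zero, sum_empty,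
    prod_empty, iteratedDeriv_zero, iteratedDeriv_one, logDeriv_apply]
  simp only [Nat.choose_zero_right, Nat.choose_succ_self_right, Nat.choose_self, Nat.cast_one,
    Nat.cast_ofNat, Int.cast_neg, Int.cast_natCast, CharP.cast_eq_zero, sub_zero, zero_add,
    Nat.reduceAdd, Nat.add_one_sub_one, tsub_zero, tsub_self, zpow_sub₀ hzc, zpow_neg,
    zpow_natCast, zpow_ofNat, pow_one]
  field_simp
  ring

theorem exists_analyticAt_eq_iteratedDeriv_two_div_sub_pow_div {ψ : 𝕜 → 𝕜} {c : 𝕜}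
    (s : ℕ) (hψ : AnalyticAt 𝕜 ψ c) (hψc : ψ c ≠ 0) :
    ∃ g : 𝕜 → 𝕜, AnalyticAt 𝕜 g c ∧
      ∀ᶠ z in 𝓝[≠] c,
        g z = iteratedDeriv 2 (fun w => ψ w / (w - c) ^ s) z / (ψ z / (z - c) ^ s)
          - s * (s + 1) / (z - c) ^ 2 - (-2 * s * logDeriv ψ c) / (z - c) := by
  have hlog : AnalyticAt 𝕜 (logDeriv ψ) c := hψ.deriv.div hψ hψc
  refine ⟨fun z => iteratedDeriv 2 ψ z / ψ z - 2 * s * dslope (logDeriv ψ) c z, ?_, ?_⟩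
  · rw [iteratedDeriv_eq_iterate]
    exact ((hψ.iterated_deriv 2).div hψ hψc).sub (analyticAt_const.mul hlog.dslope)
  filter_upwards [nhdsWithin_le_nhds hψ.eventually_analyticAt,
    nhdsWithin_le_nhds (hψ.continuousAt.eventually_ne hψc), self_mem_nhdsWithin]
    with z hψz hψz0 hz
  rw [iteratedDeriv_two_div_sub_pow_div s hψz.contDiffAt hz hψz0, dslope_of_ne _ hz,
    slope_def_field]
  ring

end

theorem stmt_5_general (n m : ℕ)
    (x : Fin n → ℂ) (y : Fin m → ℂ) (r : Fin m → ℕ)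
    (hy : Function.Injective y)
    (hxy : ∀ j i, x j ≠ y i)
    (φ : ℂ → ℂ)
    (hφ : φ = fun z => (∏ j, (z - x j)) / ∏ i, (z - y i) ^ r i)
    (j : Fin m) :
    ∃ g : ℂ → ℂ, AnalyticAt ℂ g (y j) ∧
      ∀ᶠ z in 𝓝[≠] (y j),
        g z = iteratedDeriv 2 φ z / φ z
          - (r j : ℂ) * ((r j : ℂ) + 1) / (z - y j) ^ 2
          - (-2 * (r j : ℂ) * ((∑ k, 1 / (y j - x k))
              + ∑ i ∈ Finset.univ.erase j, (r i : ℂ) / (y i - y j))) / (z - y j) := by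
  -- the exponent `1` lets `logDeriv_prod_sub_pow` treat numerator and denominator alike
  set P : ℂ → ℂ := fun z => ∏ k, (z - x k) ^ 1
  set Q : ℂ → ℂ := fun z => ∏ i ∈ univ.erase j, (z - y i) ^ r i
  have hPc : ∀ k ∈ univ, y j ≠ x k := fun k _ => (hxy k j).symm
  have hQc : ∀ i ∈ univ.erase j, y j ≠ y i := fun i hi => hy.ne (ne_of_mem_erase hi).symm
  have hP0 : P (y j) ≠ 0 :=
    prod_ne_zero_iff.mpr fun k hk => pow_ne_zero _ (sub_ne_zero.mpr (hPc k hk))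
  have hQ0 : Q (y j) ≠ 0 :=
    prod_ne_zero_iff.mpr fun i hi => pow_ne_zero _ (sub_ne_zero.mpr (hQc i hi))
  have hP : AnalyticAt ℂ P (y j) := by fun_prop
  have hQ : AnalyticAt ℂ Q (y j) := by fun_prop
  have hφ' : φ = fun z => P z / Q z / (z - y j) ^ r j := by
    simp only [hφ, P, Q, pow_one, div_div, prod_erase_mul _ _ (mem_univ j)]
  have hlog : logDeriv (fun z => P z / Q z) (y j)
      = (∑ k, 1 / (y j - x k)) + ∑ i ∈ univ.erase j, (r i : ℂ) / (y i - y j) := by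
    rw [logDeriv_div _ hP0 hQ0 hP.differentiableAt hQ.differentiableAt,
      logDeriv_prod_sub_pow _ _ _ hPc, logDeriv_prod_sub_pow _ _ _ hQc, sub_eq_add_neg,
      ← sum_neg_distrib, Nat.cast_one]
    congr 1
    exact sum_congr rfl fun i _ => by rw [← div_neg, neg_sub]
  obtain ⟨g, hg, hgeq⟩ := exists_analyticAt_eq_iteratedDeriv_two_div_sub_pow_div (r j)
    (hP.div hQ hQ0) (div_ne_zero hP0 hQ0)
  rw [hφ', ← hlog]
  exact ⟨g, hg, hgeq⟩

/-- For `φ(z) = ∏ⱼ(z-xⱼ)/∏ᵢ(z-yᵢ)^{rᵢ}`, the potential `u = φ''/φ` has a double pole at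
`y_j` with quadratic residue `rⱼ(rⱼ+1)` and first-order coefficient the accessory
parameter `H_j = -2rⱼ(∑ₖ 1/(yⱼ-xₖ) + ∑_{i≠j} rᵢ/(yᵢ-yⱼ))`: subtracting this singular
part yields a function extending analytically across `y_j`. -/
theorem stmt_5 (n m : ℕ) (hn : 0 < n) (hm : 0 < m)
    (x : Fin n → ℂ) (y : Fin m → ℂ) (r : Fin m → ℕ) (hr : ∀ i, 0 < r i)
    (hx : Function.Injective x) (hy : Function.Injective y)
    (hxy : ∀ j i, x j ≠ y i)
    (φ : ℂ → ℂ)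
    (hφ : φ = fun z => (∏ j, (z - x j)) / ∏ i, (z - y i) ^ r i)
    (j : Fin m) :
    ∃ g : ℂ → ℂ, AnalyticAt ℂ g (y j) ∧
      ∀ᶠ z in 𝓝[≠] (y j),
        g z = iteratedDeriv 2 φ z / φ z
          - (r j : ℂ) * ((r j : ℂ) + 1) / (z - y j) ^ 2
          - (-2 * (r j : ℂ) * ((∑ k, 1 / (y j - x k))
              + ∑ i ∈ Finset.univ.erase j, (r i : ℂ) / (y i - y j))) / (z - y j) :=
  stmt_5_general n m x y r hy hxy φ hφ j
end

section
/- Assume n = 1 + ∑_{i=1}^m r_i and that the Stieltjes–Bethe equations hold at every index k = 1,…,n−1. Then for every z ∈ ℂ with z ∉ {x₁,…,xₙ} ∪ {y₁,…,y_m}, φ″(z)/φ(z) = ∑_{i=1}^m [ r_i(r_i+1)/(z−y_i)² + H_i/(z−y_i) ], where H_i = −2 r_i ( ∑_{k=1}^n 1/(y_i−x_k) + ∑_{l=1, l≠i}^m r_l/(y_l−y_i) ). In particular the potential u = φ″/φ is non-singular at every x_k, has only the double poles y_i with quadratic residues r_i(r_i+1) and residues H_i, and has no constant term. -/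
/-!
Write `φ = ∏ₐ (z - vₐ) ^ eₐ` over all the points, with exponent `1` at the `xₖ` and `-rᵢ` at the
`yᵢ`. Its logarithmic derivative is `L = ∑ₐ eₐ / (z - vₐ)`, so `φ''/φ = L² + L'`, and partial
fractions give `L² + L' = ∑ₐ (eₐ (eₐ - 1) / (z - vₐ)² + 2 eₐ Rₐ / (z - vₐ))` with
`Rₐ = ∑_{b ≠ a} e_b / (vₐ - v_b)`. At `xₖ` the double pole vanishes because `eₐ = 1`, and `Rₐ` is
minus the Stieltjes–Bethe expression `Sₖ`; at `yᵢ` the coefficients are `rᵢ (rᵢ + 1)` and `Hᵢ`.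

One Stieltjes–Bethe equation follows from the others. The polynomial `q = ∏ (X - yᵢ) ^ rᵢ` has
degree `n - 1`, so it is the Lagrange interpolant of its values at the `xₖ`; differentiating the
interpolation formula at `xₖ` gives `cₖ² Sₖ = ∑_{j ≠ k} cₖ cⱼ / (xₖ - xⱼ)` for the (nonzero)
weights `cₖ = q(xₖ) / ∏_{j ≠ k} (xₖ - xⱼ)`, and the right-hand sides sum to zero by antisymmetry.
-/

open Filter Topology Finset

section SumErase

variable {ι κ : Type*} [Fintype ι] [Fintype κ] [DecidableEq ι] [DecidableEq κ]

theorem sum_erase_inl {M : Type*} [AddCommMonoid M] (f : ι ⊕ κ → M) (k : ι) :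
    ∑ b ∈ univ.erase (Sum.inl k), f b = ∑ j ∈ univ.erase k, f (Sum.inl j) + ∑ i, f (Sum.inr i) := by
  have : univ.erase (Sum.inl k) = (univ.erase k).disjSum (univ : Finset κ) := by
    ext (b | b) <;> simp
  rw [this, sum_disjSum]

theorem sum_erase_inr {M : Type*} [AddCommMonoid M] (f : ι ⊕ κ → M) (i : κ) :
    ∑ b ∈ univ.erase (Sum.inr i), f b = ∑ j, f (Sum.inl j) + ∑ l ∈ univ.erase i, f (Sum.inr l) := by
  have : univ.erase (Sum.inr i) = (univ : Finset ι).disjSum (univ.erase i) := by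
    ext (b | b) <;> simp
  rw [this, sum_disjSum]

end SumErase

section PartialFractions

variable {K : Type*} [Field K] {ι : Type*} [Fintype ι] [DecidableEq ι]

theorem sum_sum_erase_eq_zero_of_antisymm [CharZero K] (F : ι → ι → K)
    (hF : ∀ a b, F b a = -F a b) :
    ∑ a, ∑ b ∈ univ.erase a, F a b = 0 := by
  have hdiag (a : ι) : F a a = 0 := CharZero.eq_neg_self_iff.1 (hF a a)
  simp_rw [sum_erase _ (hdiag _)]
  refine CharZero.eq_neg_self_iff.1 ?_
  calc ∑ a, ∑ b, F a b = ∑ a, ∑ b, F b a := sum_comm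
    _ = -∑ a, ∑ b, F a b := by
      simp only [← sum_neg_distrib]
      exact sum_congr rfl fun a _ => sum_congr rfl fun b _ => hF a b

theorem sq_sum_div_sub [CharZero K] {v : ι → K} (hv : Function.Injective v) (W : ι → K) {z : K}
    (hz : ∀ a, z ≠ v a) :
    (∑ a, W a / (z - v a)) ^ 2 = ∑ a, W a ^ 2 / (z - v a) ^ 2
      + 2 * ∑ a, W a / (z - v a) * ∑ b ∈ univ.erase a, W b / (v a - v b) := by
  set T : ι → ι → K := fun a b => W a / (z - v a) * (W b / (v a - v b))
  -- partial fractions: `1/((z-vₐ)(z-v_b)) = (1/(z-vₐ) - 1/(z-v_b))/(vₐ-v_b)`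
  have hpair (a b : ι) (hab : b ≠ a) : W a / (z - v a) * (W b / (z - v b)) = T a b + T b a := by
    have ha := sub_ne_zero.2 (hz a)
    have hb := sub_ne_zero.2 (hz b)
    have hab' := sub_ne_zero.2 (hv.ne hab)
    have hba' := sub_ne_zero.2 (hv.ne hab.symm)
    simp only [T]
    field_simp
    ring
  have hswap : ∑ a, ∑ b ∈ univ.erase a, T b a = ∑ a, ∑ b ∈ univ.erase a, T a b := by
    have := sum_sum_erase_eq_zero_of_antisymm (fun a b => T b a - T a b) (fun _ _ => by ring)
    simpa only [sum_sub_distrib, sub_eq_zero] using this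
  calc (∑ a, W a / (z - v a)) ^ 2
      = ∑ a, W a ^ 2 / (z - v a) ^ 2
          + ∑ a, ∑ b ∈ univ.erase a, W a / (z - v a) * (W b / (z - v b)) := by
        rw [sq, sum_mul_sum, ← sum_add_distrib]
        refine sum_congr rfl fun a _ => ?_
        rw [← add_sum_erase _ _ (mem_univ a), ← div_pow, sq]
    _ = ∑ a, W a ^ 2 / (z - v a) ^ 2 + 2 * ∑ a, ∑ b ∈ univ.erase a, T a b := by
        rw [two_mul]
        nth_rw 1 [← hswap]
        congr 1
        simp only [← sum_add_distrib]
        exact sum_congr rfl fun a _ => sum_congr rfl fun b hb =>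
          (hpair a b (ne_of_mem_erase hb)).trans (add_comm _ _)
    _ = _ := by simp only [T, mul_sum]

open Polynomial Lagrange in
theorem eval_nodal_erase_erase {x : ι → K} (hx : Function.Injective x) {k l : ι} (hlk : l ≠ k) :
    (nodal ((univ.erase k).erase l) x).eval (x k)
      = (∏ j ∈ univ.erase k, (x k - x j)) / (x k - x l) := by
  have hl : l ∈ univ.erase k := mem_erase.2 ⟨hlk, mem_univ l⟩
  rw [eval_nodal, ← mul_prod_erase _ _ hl, mul_div_cancel_left₀ _ (sub_ne_zero.2 (hx.ne hlk.symm))]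

open Polynomial Lagrange in
theorem eval_derivative_eq_of_degree_lt {x : ι → K} (hx : Function.Injective x) {q : K[X]}
    (hq : q.degree < Fintype.card ι) (k : ι) :
    q.derivative.eval (x k) = q.eval (x k) * ∑ j ∈ univ.erase k, 1 / (x k - x j)
      + (∏ j ∈ univ.erase k, (x k - x j))
        * ∑ j ∈ univ.erase k, q.eval (x j) / (∏ i ∈ univ.erase j, (x j - x i)) / (x k - x j) := by
  set c : ι → K := fun j => q.eval (x j) / ∏ i ∈ univ.erase j, (x j - x i)
  set P : K := ∏ j ∈ univ.erase k, (x k - x j)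
  have hP : P ≠ 0 := prod_ne_zero_iff.2 fun j hj => sub_ne_zero.2 (hx.ne (ne_of_mem_erase hj).symm)
  have hlag : q = ∑ j, C (c j) * nodal (univ.erase j) x := by
    have h := eq_interpolate (s := univ) (v := x) (f := q) hx.injOn (by simpa using hq)
    rwa [interpolate_eq_sum] at h
  have hself : (nodal (univ.erase k) x).derivative.eval (x k)
      = P * ∑ j ∈ univ.erase k, 1 / (x k - x j) := by
    rw [derivative_nodal, eval_finsetSum, mul_sum]
    exact sum_congr rfl fun l hl => by
      rw [eval_nodal_erase_erase hx (ne_of_mem_erase hl), mul_one_div]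
  have hother (j : ι) (hjk : j ≠ k) :
      (nodal (univ.erase j) x).derivative.eval (x k) = P / (x k - x j) := by
    rw [eval_nodal_derivative_eval_node_eq (mem_erase.2 ⟨hjk.symm, mem_univ k⟩), erase_right_comm,
      eval_nodal_erase_erase hx hjk]
  have hck : c k * P = q.eval (x k) := div_mul_cancel₀ _ hP
  calc q.derivative.eval (x k) = ∑ j, c j * (nodal (univ.erase j) x).derivative.eval (x k) := by
        conv_lhs => rw [hlag]
        simp only [derivative_sum, derivative_C_mul, eval_finsetSum, eval_mul, eval_C]
    _ = c k * (P * ∑ j ∈ univ.erase k, 1 / (x k - x j))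
          + ∑ j ∈ univ.erase k, c j * (P / (x k - x j)) := by
        rw [← add_sum_erase _ _ (mem_univ k), hself]
        exact congrArg _ (sum_congr rfl fun j hj => by rw [hother j (ne_of_mem_erase hj)])
    _ = _ := by
        congr 1
        · rw [← hck, mul_assoc]
        · rw [mul_sum]
          exact sum_congr rfl fun j _ => by ring

open Polynomial in
theorem sum_sq_mul_logDeriv_sub_eq_zero [CharZero K] {x : ι → K} (hx : Function.Injective x)
    {q : K[X]} (hq : q.degree < Fintype.card ι) :
    ∑ k, (q.eval (x k) / ∏ j ∈ univ.erase k, (x k - x j)) ^ 2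
      * (q.derivative.eval (x k) / q.eval (x k) - ∑ j ∈ univ.erase k, 1 / (x k - x j)) = 0 := by
  set c : ι → K := fun j => q.eval (x j) / ∏ i ∈ univ.erase j, (x j - x i)
  have hterm (k : ι) : c k ^ 2 * (q.derivative.eval (x k) / q.eval (x k)
      - ∑ j ∈ univ.erase k, 1 / (x k - x j)) = ∑ j ∈ univ.erase k, c k * c j / (x k - x j) := by
    have hP : ∏ j ∈ univ.erase k, (x k - x j) ≠ 0 :=
      prod_ne_zero_iff.2 fun j hj => sub_ne_zero.2 (hx.ne (ne_of_mem_erase hj).symm)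
    by_cases hq0 : q.eval (x k) = 0
    · simp [c, hq0]
    have hkey := eval_derivative_eq_of_degree_lt hx hq k
    calc c k ^ 2 * (q.derivative.eval (x k) / q.eval (x k) - ∑ j ∈ univ.erase k, 1 / (x k - x j))
        = c k ^ 2 / q.eval (x k)
            * (q.derivative.eval (x k) - q.eval (x k) * ∑ j ∈ univ.erase k, 1 / (x k - x j)) := by
          field_simp
      _ = c k * ∑ j ∈ univ.erase k, c j / (x k - x j) := by
          rw [hkey, add_sub_cancel_left]
          simp only [c]
          field_simp
      _ = _ := by simp only [mul_sum, mul_div_assoc]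
  rw [sum_congr rfl fun k _ => hterm k]
  refine sum_sum_erase_eq_zero_of_antisymm _ fun a b => ?_
  rw [← neg_sub, div_neg, mul_comm (c b)]

end PartialFractions

section LogDeriv

variable {𝕜 : Type*} [NontriviallyNormedField 𝕜] {ι : Type*} [Fintype ι]

theorem hasDerivAt_prod_zpow_sub (v : ι → 𝕜) (e : ι → ℤ) {z : 𝕜} (hz : ∀ a, z ≠ v a) :
    HasDerivAt (fun w => ∏ a, (w - v a) ^ e a)
      ((∏ a, (z - v a) ^ e a) * ∑ a, (e a : 𝕜) / (z - v a)) z := by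
  classical
  have hfac (a : ι) : HasDerivAt (fun w => (w - v a) ^ e a) (e a * (z - v a) ^ (e a - 1)) z :=
    (hasDerivAt_zpow (e a) _ (Or.inl (sub_ne_zero.2 (hz a)))).comp z
      ((hasDerivAt_id z).sub_const (v a)) |>.congr_deriv (mul_one _)
  refine (HasDerivAt.fun_finsetProd (u := univ) fun a _ => hfac a).congr_deriv ?_
  rw [mul_sum]
  refine sum_congr rfl fun a _ => ?_
  rw [zpow_sub_one₀ (sub_ne_zero.2 (hz a)), ← prod_erase_mul _ _ (mem_univ a), smul_eq_mul]
  ring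

theorem hasDerivAt_sum_div_sub (v W : ι → 𝕜) {z : 𝕜} (hz : ∀ a, z ≠ v a) :
    HasDerivAt (fun w => ∑ a, W a / (w - v a)) (-∑ a, W a / (z - v a) ^ 2) z := by
  rw [← sum_neg_distrib]
  refine HasDerivAt.fun_sum fun a _ => ?_
  refine ((hasDerivAt_const z (W a)).fun_div ((hasDerivAt_id' z).sub_const (v a))
    (sub_ne_zero.2 (hz a))).congr_deriv ?_
  ring

theorem iteratedDeriv_two_eq_of_hasDerivAt_mul {f L : 𝕜 → 𝕜} {L' z : 𝕜}
    (hf : ∀ᶠ w in 𝓝 z, HasDerivAt f (f w * L w) w) (hL : HasDerivAt L L' z) :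
    iteratedDeriv 2 f z = f z * (L z ^ 2 + L') := by
  have hderiv : deriv f =ᶠ[𝓝 z] fun w => f w * L w := hf.mono fun w hw => hw.deriv
  rw [iteratedDeriv_succ, iteratedDeriv_one, hderiv.deriv_eq, (hf.self_of_nhds.fun_mul hL).deriv]
  ring

theorem iteratedDeriv_two_prod_zpow_sub_div [CharZero 𝕜] [DecidableEq ι] {v : ι → 𝕜}
    (hv : Function.Injective v) (e : ι → ℤ) {z : 𝕜} (hz : ∀ a, z ≠ v a) :
    iteratedDeriv 2 (fun w => ∏ a, (w - v a) ^ e a) z / ∏ a, (z - v a) ^ e a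
      = ∑ a, ((e a : 𝕜) * (e a - 1) / (z - v a) ^ 2
          + 2 * e a * (∑ b ∈ univ.erase a, (e b : 𝕜) / (v a - v b)) / (z - v a)) := by
  have hnear : ∀ᶠ w in 𝓝 z, ∀ a, w ≠ v a := eventually_all.2 fun a => eventually_ne_nhds (hz a)
  have hf := hnear.mono fun w hw => hasDerivAt_prod_zpow_sub v e hw
  have hf0 : ∏ a, (z - v a) ^ e a ≠ 0 :=
    prod_ne_zero_iff.2 fun a _ => zpow_ne_zero _ (sub_ne_zero.2 (hz a))
  rw [iteratedDeriv_two_eq_of_hasDerivAt_mul hf (hasDerivAt_sum_div_sub v _ hz),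
    mul_div_cancel_left₀ _ hf0, sq_sum_div_sub hv _ hz, mul_sum, ← sum_neg_distrib,
    ← sum_add_distrib, ← sum_add_distrib]
  exact sum_congr rfl fun a _ => by ring

open Polynomial in
theorem eval_derivative_prod_X_sub_C_pow_div (y : ι → 𝕜) (r : ι → ℕ) {t : 𝕜} (ht : ∀ i, t ≠ y i) :
    (∏ i, (X - C (y i)) ^ r i).derivative.eval t / (∏ i, (X - C (y i)) ^ r i).eval t
      = ∑ i, (r i : 𝕜) / (t - y i) := by
  have heval : (fun w => (∏ i, (X - C (y i)) ^ r i).eval w)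
      = fun w => ∏ i, (w - y i) ^ (r i : ℤ) := by
    funext w; simp [eval_prod]
  have h := hasDerivAt_prod_zpow_sub y (fun i => (r i : ℤ)) ht
  rw [← heval] at h
  have hq0 : (∏ i, (X - C (y i)) ^ r i).eval t ≠ 0 := by
    simpa [eval_prod] using prod_ne_zero_iff.2 fun i _ => pow_ne_zero (r i) (sub_ne_zero.2 (ht i))
  rw [← Polynomial.deriv, h.deriv, congrFun heval t, ← congrFun heval t, mul_div_cancel_left₀ _ hq0]
  simp

end LogDeriv

section StieltjesBethe

variable {ι κ : Type*} [Fintype ι] [Fintype κ]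

def stieltjesBethe {K : Type*} [Field K] [DecidableEq ι] (x : ι → K) (y : κ → K) (r : κ → ℕ)
    (k : ι) : K :=
  ∑ i, (r i : K) / (x k - y i) - ∑ j ∈ univ.erase k, 1 / (x k - x j)

def accessoryParameter {K : Type*} [Field K] [DecidableEq κ] (x : ι → K) (y : κ → K)
    (r : κ → ℕ) (i : κ) : K :=
  -2 * r i * (∑ k, 1 / (y i - x k) + ∑ l ∈ univ.erase i, (r l : K) / (y l - y i))

variable {𝕜 : Type*} [NontriviallyNormedField 𝕜] [CharZero 𝕜]

open Polynomial in
theorem stieltjesBethe_eq_zero_of_forall_ne [DecidableEq ι] {x : ι → 𝕜} {y : κ → 𝕜} {r : κ → ℕ}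
    (hx : Function.Injective x) (hxy : ∀ j i, x j ≠ y i) (hcard : Fintype.card ι = 1 + ∑ i, r i)
    (k₀ : ι) (hSB : ∀ k ≠ k₀, stieltjesBethe x y r k = 0) : stieltjesBethe x y r k₀ = 0 := by
  set q : 𝕜[X] := ∏ i, (X - C (y i)) ^ r i
  have hdeg : q.degree < Fintype.card ι := by
    have : q.natDegree = ∑ i, r i := by
      simp [q, natDegree_prod _ _ fun i _ => pow_ne_zero (r i) (X_sub_C_ne_zero (y i))]
    exact degree_le_natDegree.trans_lt (by rw [this, hcard]; exact_mod_cast by omega)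
  have hsum := sum_sq_mul_logDeriv_sub_eq_zero hx hdeg
  simp only [eval_derivative_prod_X_sub_C_pow_div y r (hxy _), q] at hsum
  rw [sum_eq_single k₀ fun k _ hk => by rw [← stieltjesBethe, hSB k hk, mul_zero]
    fun h => absurd (mem_univ k₀) h] at hsum
  refine (mul_eq_zero.1 hsum).resolve_left (pow_ne_zero 2 (div_ne_zero ?_ ?_))
  · simpa [eval_prod] using
      prod_ne_zero_iff.2 fun i _ => pow_ne_zero (r i) (sub_ne_zero.2 (hxy k₀ i))
  · exact prod_ne_zero_iff.2 fun j hj => sub_ne_zero.2 (hx.ne (ne_of_mem_erase hj).symm)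

theorem iteratedDeriv_two_div_eq_of_stieltjesBethe [DecidableEq ι] [DecidableEq κ]
    {x : ι → 𝕜} {y : κ → 𝕜} {r : κ → ℕ} (hx : Function.Injective x) (hy : Function.Injective y)
    (hxy : ∀ j i, x j ≠ y i) (hSB : ∀ k, stieltjesBethe x y r k = 0) {z : 𝕜}
    (hzx : ∀ j, z ≠ x j) (hzy : ∀ i, z ≠ y i) :
    iteratedDeriv 2 (fun w => (∏ j, (w - x j)) / ∏ i, (w - y i) ^ r i) z
        / ((∏ j, (z - x j)) / ∏ i, (z - y i) ^ r i)
      = ∑ i, ((r i : 𝕜) * (r i + 1) / (z - y i) ^ 2 + accessoryParameter x y r i / (z - y i)) := by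
  set v : ι ⊕ κ → 𝕜 := Sum.elim x y
  set e : ι ⊕ κ → ℤ := Sum.elim (fun _ => 1) fun i => -(r i : ℤ)
  have hprod (w : 𝕜) : (∏ j, (w - x j)) / ∏ i, (w - y i) ^ r i = ∏ a, (w - v a) ^ e a := by
    simp [v, e, Fintype.prod_sum_type, zpow_neg, div_eq_mul_inv]
  simp_rw [hprod]
  rw [iteratedDeriv_two_prod_zpow_sub_div (hx.sumElim hy hxy) e (Sum.forall.2 ⟨hzx, hzy⟩),
    Fintype.sum_sum_type]
  have hinl (k : ι) : ∑ j ∈ univ.erase k, 1 / (x k - x j) + ∑ i, -(r i : 𝕜) / (x k - y i)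
      = -stieltjesBethe x y r k := by
    simp only [stieltjesBethe, neg_div, sum_neg_distrib]
    ring
  have hinr (i : κ) : ∑ k, 1 / (y i - x k) + ∑ l ∈ univ.erase i, -(r l : 𝕜) / (y i - y l)
      = ∑ k, 1 / (y i - x k) + ∑ l ∈ univ.erase i, (r l : 𝕜) / (y l - y i) := by
    simp only [← neg_sub (y i), div_neg, neg_div]
  simp only [e, Sum.elim_inl, Sum.elim_inr, sum_erase_inl, sum_erase_inr]
  push_cast
  simp only [hinl, hinr, hSB, accessoryParameter, sub_self, mul_zero, neg_zero, zero_div,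
    add_zero, sum_const_zero, zero_add]
  exact sum_congr rfl fun i _ => by ring

end StieltjesBethe

theorem stmt_7_general (n m : ℕ)
    (x : Fin n → ℂ) (y : Fin m → ℂ) (r : Fin m → ℕ)
    (hx : Function.Injective x) (hy : Function.Injective y)
    (hxy : ∀ j i, x j ≠ y i)
    (hnr : n = 1 + ∑ i, r i)
    (φ : ℂ → ℂ)
    (hφ : φ = fun z => (∏ j, (z - x j)) / ∏ i, (z - y i) ^ r i)
    (hSB : ∀ k : Fin n, (k : ℕ) + 1 < n →
      ∑ i, (r i : ℂ) / (x k - y i)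
        - ∑ j ∈ Finset.univ.erase k, 1 / (x k - x j) = 0) :
    ∀ z : ℂ, (∀ j, z ≠ x j) → (∀ i, z ≠ y i) →
      iteratedDeriv 2 φ z / φ z =
        ∑ i, ((r i : ℂ) * ((r i : ℂ) + 1) / (z - y i) ^ 2
          + (-2 * (r i : ℂ) * ((∑ k, 1 / (y i - x k))
              + ∑ l ∈ Finset.univ.erase i, (r l : ℂ) / (y l - y i))) / (z - y i)) := by
  have hSB_all (k₀ : Fin n) : stieltjesBethe x y r k₀ = 0 := by
    by_cases hk₀ : (k₀ : ℕ) + 1 < n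
    · exact hSB k₀ hk₀
    refine stieltjesBethe_eq_zero_of_forall_ne hx hxy (by rw [Fintype.card_fin, hnr]) k₀
      fun k hk => hSB k ?_
    have := Fin.val_ne_of_ne hk
    omega
  intro z hzx hzy
  subst hφ
  exact iteratedDeriv_two_div_eq_of_stieltjesBethe hx hy hxy hSB_all hzx hzy

/-- If `n = 1 + ∑ rᵢ` and the Stieltjes–Bethe equations hold at indices `1,…,n-1`, then
`φ''/φ = ∑ᵢ [rᵢ(rᵢ+1)/(z-yᵢ)² + Hᵢ/(z-yᵢ)]` on the complement of the points, where the
`Hᵢ` are the accessory parameters. -/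
theorem stmt_7 (n m : ℕ) (hn : 0 < n) (hm : 0 < m)
    (x : Fin n → ℂ) (y : Fin m → ℂ) (r : Fin m → ℕ) (hr : ∀ i, 0 < r i)
    (hx : Function.Injective x) (hy : Function.Injective y)
    (hxy : ∀ j i, x j ≠ y i)
    (hnr : n = 1 + ∑ i, r i)
    (φ : ℂ → ℂ)
    (hφ : φ = fun z => (∏ j, (z - x j)) / ∏ i, (z - y i) ^ r i)
    (hSB : ∀ k : Fin n, (k : ℕ) + 1 < n →
      ∑ i, (r i : ℂ) / (x k - y i)
        - ∑ j ∈ Finset.univ.erase k, 1 / (x k - x j) = 0) :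
    ∀ z : ℂ, (∀ j, z ≠ x j) → (∀ i, z ≠ y i) →
      iteratedDeriv 2 φ z / φ z =
        ∑ i, ((r i : ℂ) * ((r i : ℂ) + 1) / (z - y i) ^ 2
          + (-2 * (r i : ℂ) * ((∑ k, 1 / (y i - x k))
              + ∑ l ∈ Finset.univ.erase i, (r l : ℂ) / (y l - y i))) / (z - y i)) :=
  stmt_7_general n m x y r hx hy hxy hnr φ hφ hSB
end

section
/- Assume n = 1 + ∑_{i=1}^m r_i. Then ∑_{k=1}^n φ″(x_k)/φ′(x_k)³ = 0. Equivalently, the sum over k = 1,…,n of the residues of 1/φ² at its double poles x_k vanishes; consequently, if the Stieltjes–Bethe equations hold at the indices k = 1,…,n−1 then they also hold at k = n. -/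
/-!
Write `φ = P / Q` with `P = ∏ (z - x_j) = (z - x_k) P_k` and `Q = ∏ (z - y_i) ^ r_i`. Near
`x_k`, `φ = (z - x_k) ψ` with `ψ = P_k / Q`, so `φ'(x_k) = ψ(x_k)` and `φ''(x_k) = 2 ψ'(x_k)`;
hence `φ''(x_k) / φ'(x_k)³ = -(Q² / P_k²)'(x_k)`, minus the residue of `Q² / P²` at its double
pole `x_k`. These residues sum to zero because `deg Q² = 2n - 2 < 2n - 1`. Algebraically: the
Hermite interpolant `H = ∑_k (α_k + β_k (X - x_k)) P_k²` of `Q²` at the double nodes `x_k` has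
degree `< 2n` and `P² ∣ Q² - H`, so `H = Q²`, and the coefficient of `X^(2n-1)` gives
`∑_k β_k = 0`, where `β_k` is the residue. Logarithmic differentiation turns `β_k` into
`2 (Q(x_k) / P_k(x_k))² S_k`, with `S_k` the Stieltjes–Bethe expression at `k`; so if all `S_k`
but one vanish, the last one vanishes too.
-/

open Finset Filter Topology Polynomial Lagrange

section Residues

variable {F : Type*} [Field F]

/-- The residue at `a` of `f / ((X - a) ^ 2 * p ^ 2)`, i.e. the derivative of `f / p ^ 2`
at `a`. -/
noncomputable def residueAtDoublePole (f p : F[X]) (a : F) : F :=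
  ((derivative f).eval a * p.eval a - 2 * f.eval a * (derivative p).eval a) / p.eval a ^ 3

/-- The multiple of `p ^ 2` that agrees with `f` to first order at `a` when `p a ≠ 0`. -/
noncomputable def hermiteTerm (f p : F[X]) (a : F) : F[X] :=
  (C (f.eval a / p.eval a ^ 2) + C (residueAtDoublePole f p a) * (X - C a)) * p ^ 2

theorem X_sub_C_sq_dvd_of_isRoot_of_isRoot_derivative {R : Type*} [CommRing R] {p : R[X]}
    {a : R} (h : p.IsRoot a) (h' : (derivative p).IsRoot a) : (X - C a) ^ 2 ∣ p := by
  obtain ⟨q, rfl⟩ := dvd_iff_isRoot.mpr h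
  have hq : q.IsRoot a := by
    simpa [IsRoot, derivative_mul] using h'
  obtain ⟨q', rfl⟩ := dvd_iff_isRoot.mpr hq
  exact ⟨q', by ring⟩

theorem X_sub_C_sq_dvd_sub_hermiteTerm (f : F[X]) {p : F[X]} {a : F} (hp : p.eval a ≠ 0) :
    (X - C a) ^ 2 ∣ f - hermiteTerm f p a := by
  apply X_sub_C_sq_dvd_of_isRoot_of_isRoot_derivative
  · simp only [hermiteTerm, IsRoot, eval_sub, eval_mul, eval_add, eval_C, eval_X, eval_pow]
    field_simp
    ring
  · simp only [hermiteTerm, residueAtDoublePole, IsRoot, derivative_sub, derivative_mul,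
      derivative_add, derivative_C, derivative_X, derivative_pow, eval_sub, eval_mul,
      eval_add, eval_C, eval_X, eval_pow, eval_zero, eval_one]
    field_simp
    ring

theorem natDegree_hermiteTerm_le (f p : F[X]) (a : F) :
    (hermiteTerm f p a).natDegree ≤ 2 * p.natDegree + 1 := by
  unfold hermiteTerm
  refine natDegree_mul_le.trans ?_
  rw [natDegree_pow]
  have : (C (f.eval a / p.eval a ^ 2) + C (residueAtDoublePole f p a) * (X - C a)).natDegree
      ≤ 1 := by
    compute_degree
  omega

theorem coeff_hermiteTerm (f : F[X]) {p : F[X]} (hp : p.Monic) (a : F) :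
    (hermiteTerm f p a).coeff (2 * p.natDegree + 1) = residueAtDoublePole f p a := by
  have hlead : ((X - C a) * p ^ 2).coeff (2 * p.natDegree + 1) = 1 := by
    have h := ((monic_X_sub_C a).mul (hp.pow 2)).coeff_natDegree
    rwa [(monic_X_sub_C a).natDegree_mul (hp.pow 2), natDegree_X_sub_C, hp.natDegree_pow,
      add_comm] at h
  have hlow : (p ^ 2).coeff (2 * p.natDegree + 1) = 0 :=
    coeff_eq_zero_of_natDegree_lt (by rw [natDegree_pow]; omega)
  rw [hermiteTerm, add_mul, mul_assoc, coeff_add, coeff_C_mul, coeff_C_mul, hlow, hlead]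
  ring

theorem sum_residueAtDoublePole_nodal {ι : Type*} [DecidableEq ι] {s : Finset ι} {v : ι → F}
    (hv : Set.InjOn v s) {f : F[X]} (hf : f.natDegree < 2 * #s) :
    ∑ i ∈ s, residueAtDoublePole f (nodal (s.erase i) v) (v i) = f.coeff (2 * #s - 1) := by
  set H := ∑ i ∈ s, hermiteTerm f (nodal (s.erase i) v) (v i) with hH_def
  have hdeg_erase : ∀ i ∈ s, (nodal (s.erase i) v).natDegree = #s - 1 := fun i hi => by
    rw [natDegree_nodal, card_erase_of_mem hi]
  have hsq_dvd : ∀ k ∈ s, (X - C (v k)) ^ 2 ∣ f - H := fun k hk => by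
    rw [hH_def, ← add_sum_erase _ _ hk, sub_add_eq_sub_sub]
    have hk_node : ∀ j ∈ s.erase k, v k ≠ v j :=
      fun j hj => hv.ne hk (mem_of_mem_erase hj) (ne_of_mem_erase hj).symm
    refine dvd_sub (X_sub_C_sq_dvd_sub_hermiteTerm f (eval_nodal_not_at_node hk_node))
      (dvd_sum fun j hj => ?_)
    have hkj : k ∈ s.erase j := mem_erase.mpr ⟨(ne_of_mem_erase hj).symm, hk⟩
    exact (pow_dvd_pow_of_dvd (X_sub_C_dvd_nodal v hkj) 2).trans (dvd_mul_left _ _)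
  have hnodal_dvd : nodal s v ^ 2 ∣ f - H := by
    rw [nodal_eq, ← prod_pow]
    refine prod_dvd_of_coprime (fun i hi j hj hij => ?_) hsq_dvd
    exact (isCoprime_X_sub_C_of_isUnit_sub (sub_ne_zero.mpr (hv.ne hi hj hij)).isUnit).pow
  have hH : H.natDegree < 2 * #s := by
    refine lt_of_le_of_lt (natDegree_sum_le_of_forall_le _ _ (n := 2 * #s - 1) fun i hi => ?_) ?_
    · have := natDegree_hermiteTerm_le f (nodal (s.erase i) v) (v i)
      rw [hdeg_erase i hi] at this
      have : 0 < #s := card_pos.mpr ⟨i, hi⟩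
      omega
    · omega
  have hfH : f = H := sub_eq_zero.mp <| eq_zero_of_dvd_of_natDegree_lt hnodal_dvd <| by
    rw [natDegree_pow, natDegree_nodal]
    exact (natDegree_sub_le _ _).trans_lt (max_lt hf hH)
  rw [show f.coeff (2 * #s - 1) = H.coeff (2 * #s - 1) by rw [← hfH], finsetSum_coeff]
  refine sum_congr rfl fun i hi => ?_
  have := coeff_hermiteTerm f (nodal_monic (s := s.erase i) (v := v)) (v i)
  rw [hdeg_erase i hi, show 2 * (#s - 1) + 1 = 2 * #s - 1 by
    have : 0 < #s := card_pos.mpr ⟨i, hi⟩; omega] at this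
  exact this.symm

theorem residueAtDoublePole_sq {p q : F[X]} {a : F} (hp : p.eval a ≠ 0) (hq : q.eval a ≠ 0) :
    residueAtDoublePole (q ^ 2) p a = 2 * (q.eval a / p.eval a) ^ 2 *
      ((derivative q).eval a / q.eval a - (derivative p).eval a / p.eval a) := by
  simp only [residueAtDoublePole, derivative_pow, eval_mul, eval_pow, eval_C]
  field_simp
  push_cast
  ring

theorem eval_derivative_prod_X_sub_C_pow {ι : Type*} (s : Finset ι) (c : ι → F) (r : ι → ℕ)
    {t : F} (ht : ∀ i ∈ s, t ≠ c i) :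
    (derivative (∏ i ∈ s, (X - C (c i)) ^ r i)).eval t
      = (∏ i ∈ s, (X - C (c i)) ^ r i).eval t * ∑ i ∈ s, (r i : F) / (t - c i) := by
  classical
  induction s using Finset.induction_on with
  | empty => simp
  | insert i s hi ih =>
    rw [forall_mem_insert] at ht
    have hti : t - c i ≠ 0 := sub_ne_zero.mpr ht.1
    rw [prod_insert hi, sum_insert hi, derivative_mul, eval_add, eval_mul, eval_mul, ih ht.2,
      derivative_X_sub_C_pow]
    simp only [eval_mul, eval_pow, eval_sub, eval_X, eval_C]
    rcases Nat.eq_zero_or_pos (r i) with h | h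
    · simp [h]
    · rw [← Nat.sub_add_cancel h]
      field_simp
      push_cast
      ring

theorem eval_derivative_nodal {ι : Type*} (s : Finset ι) (v : ι → F) {t : F}
    (ht : ∀ i ∈ s, t ≠ v i) :
    (derivative (nodal s v)).eval t = (nodal s v).eval t * ∑ i ∈ s, 1 / (t - v i) := by
  simpa [nodal_eq] using eval_derivative_prod_X_sub_C_pow s v (fun _ => 1) ht

theorem eval_prod_X_sub_C_pow_ne_zero {ι : Type*} {s : Finset ι} {c : ι → F} (r : ι → ℕ)
    {a : F} (hc : ∀ i ∈ s, a ≠ c i) : (∏ i ∈ s, (X - C (c i)) ^ r i).eval a ≠ 0 := by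
  simpa [eval_prod, prod_eq_zero_iff, sub_eq_zero] using fun i hi h => absurd h (hc i hi)

theorem residueAtDoublePole_sq_prod_X_sub_C_pow_nodal {ι κ : Type*} {s : Finset ι} {v : ι → F}
    {t : Finset κ} {c : κ → F} (r : κ → ℕ) {a : F} (hv : ∀ j ∈ s, a ≠ v j)
    (hc : ∀ i ∈ t, a ≠ c i) :
    residueAtDoublePole ((∏ i ∈ t, (X - C (c i)) ^ r i) ^ 2) (nodal s v) a
      = 2 * ((∏ i ∈ t, (X - C (c i)) ^ r i).eval a / (nodal s v).eval a) ^ 2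
          * (∑ i ∈ t, (r i : F) / (a - c i) - ∑ j ∈ s, 1 / (a - v j)) := by
  have hp : (nodal s v).eval a ≠ 0 := eval_nodal_not_at_node hv
  have hq := eval_prod_X_sub_C_pow_ne_zero r hc
  rw [residueAtDoublePole_sq hp hq, eval_derivative_nodal _ _ hv,
    eval_derivative_prod_X_sub_C_pow _ _ _ hc, mul_div_cancel_left₀ _ hp,
    mul_div_cancel_left₀ _ hq]

end Residues

section Calculus

variable {𝕜 : Type*} [NontriviallyNormedField 𝕜]

theorem deriv_sub_mul_at_self {ψ : 𝕜 → 𝕜} {a : 𝕜} (hψ : DifferentiableAt 𝕜 ψ a) :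
    deriv (fun z => (z - a) * ψ z) a = ψ a := by
  rw [deriv_fun_mul (by fun_prop) hψ]
  simp

theorem iteratedDeriv_two_sub_mul_at_self [CompleteSpace 𝕜] {ψ : 𝕜 → 𝕜} {a : 𝕜}
    (hψ : AnalyticAt 𝕜 ψ a) :
    iteratedDeriv 2 (fun z => (z - a) * ψ z) a = 2 * deriv ψ a := by
  have hlin : ∀ z, DifferentiableAt 𝕜 (fun w => w - a) z := fun z => by fun_prop
  have hderiv : deriv (fun z => (z - a) * ψ z) =ᶠ[𝓝 a] fun z => ψ z + (z - a) * deriv ψ z := by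
    filter_upwards [hψ.eventually_analyticAt] with z hz
    rw [deriv_fun_mul (hlin z) hz.differentiableAt]
    simp
  have hψ' := hψ.deriv.differentiableAt
  rw [iteratedDeriv_succ, iteratedDeriv_one, hderiv.deriv_eq,
    deriv_fun_add hψ.differentiableAt ((hlin a).fun_mul hψ'), deriv_fun_mul (hlin a) hψ']
  simp [two_mul]

theorem iteratedDeriv_two_div_deriv_pow_three_eq_neg_residue [CompleteSpace 𝕜] {p q : 𝕜[X]}
    {a : 𝕜} (hq : q.eval a ≠ 0) :
    iteratedDeriv 2 (fun z => (z - a) * (p.eval z / q.eval z)) a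
        / deriv (fun z => (z - a) * (p.eval z / q.eval z)) a ^ 3
      = -residueAtDoublePole (q ^ 2) p a := by
  have hψ : AnalyticAt 𝕜 (fun z => p.eval z / q.eval z) a :=
    (AnalyticOnNhd.eval_polynomial p a trivial).div
      (AnalyticOnNhd.eval_polynomial q a trivial) hq
  rw [iteratedDeriv_two_sub_mul_at_self hψ, deriv_sub_mul_at_self hψ.differentiableAt,
    deriv_fun_div p.differentiableAt q.differentiableAt hq, Polynomial.deriv, Polynomial.deriv]
  by_cases hp : p.eval a = 0
  · simp [hp, residueAtDoublePole]
  · simp only [residueAtDoublePole, derivative_pow, eval_mul, eval_pow, eval_C]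
    field_simp
    ring

end Calculus

theorem stmt_8_general (n m : ℕ) (hn : 0 < n)
    (x : Fin n → ℂ) (y : Fin m → ℂ) (r : Fin m → ℕ)
    (hx : Function.Injective x)
    (hxy : ∀ j i, x j ≠ y i)
    (hnr : n = 1 + ∑ i, r i)
    (φ : ℂ → ℂ)
    (hφ : φ = fun z => (∏ j, (z - x j)) / ∏ i, (z - y i) ^ r i) :
    (∑ k, iteratedDeriv 2 φ (x k) / (deriv φ (x k)) ^ 3 = 0) ∧
    ((∀ k : Fin n, (k : ℕ) + 1 < n →
        ∑ i, (r i : ℂ) / (x k - y i)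
          - ∑ j ∈ Finset.univ.erase k, 1 / (x k - x j) = 0) →
      ∑ i, (r i : ℂ) / (x ⟨n - 1, Nat.sub_lt hn Nat.one_pos⟩ - y i)
        - ∑ j ∈ Finset.univ.erase (⟨n - 1, Nat.sub_lt hn Nat.one_pos⟩ : Fin n),
            1 / (x ⟨n - 1, Nat.sub_lt hn Nat.one_pos⟩ - x j) = 0) := by
  set Q : ℂ[X] := ∏ i, (X - C (y i)) ^ r i
  set P : Fin n → ℂ[X] := fun k => nodal (univ.erase k) x
  have hx_ne : ∀ k, ∀ j ∈ univ.erase k, x k ≠ x j :=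
    fun k j hj => hx.ne (ne_of_mem_erase hj).symm
  have hQ : ∀ k, Q.eval (x k) ≠ 0 := fun k => eval_prod_X_sub_C_pow_ne_zero r fun i _ => hxy k i
  have hP : ∀ k, (P k).eval (x k) ≠ 0 := fun k => eval_nodal_not_at_node (hx_ne k)
  have hres : ∀ k, residueAtDoublePole (Q ^ 2) (P k) (x k)
      = 2 * (Q.eval (x k) / (P k).eval (x k)) ^ 2
        * (∑ i, (r i : ℂ) / (x k - y i) - ∑ j ∈ univ.erase k, 1 / (x k - x j)) := fun k =>
    residueAtDoublePole_sq_prod_X_sub_C_pow_nodal r (hx_ne k) fun i _ => hxy k i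
  have hsum : ∑ k, residueAtDoublePole (Q ^ 2) (P k) (x k) = 0 := by
    have hdegQ : Q.natDegree = ∑ i, r i := by
      simp [Q, natDegree_prod_of_monic _ _ fun i _ => (monic_X_sub_C (y i)).pow (r i)]
    rw [sum_residueAtDoublePole_nodal hx.injOn (by simp [natDegree_pow, hdegQ]; omega)]
    exact coeff_eq_zero_of_natDegree_lt (by simp [natDegree_pow, hdegQ]; omega)
  refine ⟨?_, fun hS => ?_⟩
  · have hφ_at : ∀ k, φ = fun z => (z - x k) * ((P k).eval z / Q.eval z) := fun k => by
      ext z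
      simp [hφ, P, Q, eval_nodal, eval_prod, mul_div_assoc,
        ← mul_prod_erase univ (fun j => z - x j) (mem_univ k)]
    calc ∑ k, iteratedDeriv 2 φ (x k) / deriv φ (x k) ^ 3
        = ∑ k, -residueAtDoublePole (Q ^ 2) (P k) (x k) := sum_congr rfl fun k _ => by
          rw [hφ_at k]; exact iteratedDeriv_two_div_deriv_pow_three_eq_neg_residue (hQ k)
      _ = 0 := by rw [sum_neg_distrib, hsum, neg_zero]
  · set k₀ : Fin n := ⟨n - 1, Nat.sub_lt hn Nat.one_pos⟩
    rw [sum_eq_single k₀ (fun k _ hk => by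
        rw [hres, hS k (by have : (k : ℕ) ≠ n - 1 := fun h => hk (Fin.ext h); omega), mul_zero])
      (by simp), hres] at hsum
    exact (mul_eq_zero.mp hsum).resolve_left (by simp [hP, hQ])

/-- If `n = 1 + ∑ rᵢ` then the sum over `k` of the residues `-φ''(x_k)/φ'(x_k)³` of
`1/φ²` vanishes; consequently if the Stieltjes–Bethe equations hold at `k = 1,…,n-1`
they also hold at `k = n`. -/
theorem stmt_8 (n m : ℕ) (hn : 0 < n) (hm : 0 < m)
    (x : Fin n → ℂ) (y : Fin m → ℂ) (r : Fin m → ℕ) (hr : ∀ i, 0 < r i)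
    (hx : Function.Injective x) (hy : Function.Injective y)
    (hxy : ∀ j i, x j ≠ y i)
    (hnr : n = 1 + ∑ i, r i)
    (φ : ℂ → ℂ)
    (hφ : φ = fun z => (∏ j, (z - x j)) / ∏ i, (z - y i) ^ r i) :
    (∑ k, iteratedDeriv 2 φ (x k) / (deriv φ (x k)) ^ 3 = 0) ∧
    ((∀ k : Fin n, (k : ℕ) + 1 < n →
        ∑ i, (r i : ℂ) / (x k - y i)
          - ∑ j ∈ Finset.univ.erase k, 1 / (x k - x j) = 0) →
      ∑ i, (r i : ℂ) / (x ⟨n - 1, Nat.sub_lt hn Nat.one_pos⟩ - y i)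
        - ∑ j ∈ Finset.univ.erase (⟨n - 1, Nat.sub_lt hn Nat.one_pos⟩ : Fin n),
            1 / (x ⟨n - 1, Nat.sub_lt hn Nat.one_pos⟩ - x j) = 0) :=
  stmt_8_general n m hn x y r hx hxy hnr φ hφ
end

section
/- Fix k with 1 ≤ k ≤ n, and assume Θ(x_k−x_j) ≠ 0 for every j ≠ k and Θ(x_k−y_i) ≠ 0 for every i, so that φ is analytic near x_k with a simple zero at x_k. Then the following are equivalent: (a) φ″(x_k) = 0 (equivalently the residue of 1/φ² at its double pole x_k vanishes, equivalently φ″/φ extends analytically across x_k); (b) the elliptic Stieltjes–Bethe equation ∑_{i=1}^m r_i·f(x_k−y_i) − ∑_{j=1, j≠k}^n f(x_k−x_j) = 2πiβ₁ holds, where f = Θ′/Θ; (c) the derivative at t = x_k of the function t ↦ exp(2πiβ₁t)·∏_{l≠k}Θ(t−x_l)/∏_{i=1}^m Θ(t−y_i)^{r_i} vanishes. -/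
/-! Write `φ(z) = Θ(z - x_k) ψ(z)` with `ψ` the function of (c), analytic and nonvanishing at
`x_k`. Oddness of `Θ` gives `Θ(0) = Θ''(0) = 0`, so by Leibniz `φ''(x_k) = 2 Θ'(0) ψ'(x_k)`:
this is (a) ⇔ (c). Since `ψ(x_k) ≠ 0`, `ψ'(x_k) = 0` iff the logarithmic derivative of `ψ`
vanishes there, and that logarithmic derivative is
`2πiβ₁ + ∑_{j≠k} f(x_k - x_j) - ∑ᵢ rᵢ f(x_k - yᵢ)`: this is (b) ⇔ (c). -/

section

variable {𝕜 : Type*} [NontriviallyNormedField 𝕜]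

theorem Function.Odd.iteratedDeriv_eq_zero_of_even {F : Type*} [NormedAddCommGroup F]
    [NormedSpace 𝕜 F] [IsAddTorsionFree F] {f : 𝕜 → F} (hf : f.Odd) {n : ℕ} (hn : Even n) :
    iteratedDeriv n f 0 = 0 := by
  have h := iteratedDeriv_comp_neg n f 0
  simp only [hf.eq, iteratedDeriv_fun_neg, neg_zero, hn.neg_one_pow, one_smul] at h
  exact self_eq_neg.mp h.symm

theorem iteratedDeriv_two_mul_of_apply_eq_zero {f g : 𝕜 → 𝕜} {a : 𝕜}
    (hf : ContDiffAt 𝕜 2 f a) (hg : ContDiffAt 𝕜 2 g a)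
    (hf₀ : f a = 0) (hf₂ : iteratedDeriv 2 f a = 0) :
    iteratedDeriv 2 (f * g) a = 2 * deriv f a * deriv g a := by
  rw [iteratedDeriv_mul hf hg]
  simp [Finset.sum_range_succ, hf₀, hf₂]

theorem logDeriv_comp_sub_const {𝕜' : Type*} [NontriviallyNormedField 𝕜'] [NormedAlgebra 𝕜 𝕜']
    (f : 𝕜 → 𝕜') (a b : 𝕜) : logDeriv (fun z => f (z - b)) a = logDeriv f (a - b) := by
  simp only [logDeriv_apply, deriv_comp_sub_const]

end

theorem logDeriv_cexp_const_mul (c a : ℂ) : logDeriv (fun z => Complex.exp (c * z)) a = c := by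
  rw [logDeriv_apply, ((hasDerivAt_id' a).const_mul c).cexp.deriv]
  field_simp [Complex.exp_ne_zero]

theorem logDeriv_cexp_mul_prod_div_prod {ι κ : Type*} (s : Finset ι) (t : Finset κ)
    {Θ : ℂ → ℂ} (hΘ : Differentiable ℂ Θ) (c : ℂ) (x : ι → ℂ) (y : κ → ℂ) (r : κ → ℕ) {a : ℂ}
    (hx : ∀ l ∈ s, Θ (a - x l) ≠ 0) (hy : ∀ i ∈ t, Θ (a - y i) ≠ 0) :
    logDeriv (fun z => Complex.exp (c * z) * (∏ l ∈ s, Θ (z - x l)) / ∏ i ∈ t, Θ (z - y i) ^ r i)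
      a = c + ∑ l ∈ s, logDeriv Θ (a - x l) - ∑ i ∈ t, r i * logDeriv Θ (a - y i) := by
  have hd : ∀ b, DifferentiableAt ℂ (fun z => Θ (z - b)) a := fun b => by fun_prop
  have hy' : ∀ i ∈ t, Θ (a - y i) ^ r i ≠ 0 := fun i hi => pow_ne_zero _ (hy i hi)
  have hP : ∏ l ∈ s, Θ (a - x l) ≠ 0 := Finset.prod_ne_zero_iff.mpr hx
  have hQ : ∏ i ∈ t, Θ (a - y i) ^ r i ≠ 0 := Finset.prod_ne_zero_iff.mpr hy'
  have hE : Complex.exp (c * a) ≠ 0 := Complex.exp_ne_zero _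
  rw [logDeriv_div, logDeriv_mul, logDeriv_cexp_const_mul, logDeriv_prod hx fun l _ => hd (x l),
    logDeriv_prod (f := fun i z => Θ (z - y i) ^ r i) hy' fun i _ => (hd (y i)).pow _]
  · simp only [logDeriv_fun_pow (hd _), logDeriv_comp_sub_const]
  all_goals first | fun_prop | assumption | exact mul_ne_zero hE hP

theorem stmt_15_general (n m : ℕ)
    (Θ : ℂ → ℂ) (hΘ : ∀ z : ℂ, AnalyticAt ℂ Θ z)
    (hodd : ∀ z : ℂ, Θ (-z) = -Θ z) (hΘ' : deriv Θ 0 ≠ 0)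
    (x : Fin n → ℂ) (y : Fin m → ℂ) (r : Fin m → ℕ)
    (β₁ : ℤ)
    (φ : ℂ → ℂ)
    (hφ : φ = fun z => Complex.exp (2 * (Real.pi : ℂ) * Complex.I * (β₁ : ℂ) * z)
      * (∏ j, Θ (z - x j)) / ∏ i, Θ (z - y i) ^ r i)
    (k : Fin n)
    (hxx : ∀ j ∈ Finset.univ.erase k, Θ (x k - x j) ≠ 0)
    (hxy : ∀ i, Θ (x k - y i) ≠ 0) :
    ((iteratedDeriv 2 φ (x k) = 0) ↔
      (∑ i, (r i : ℂ) * (deriv Θ (x k - y i) / Θ (x k - y i))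
        - ∑ j ∈ Finset.univ.erase k, deriv Θ (x k - x j) / Θ (x k - x j)
        = 2 * (Real.pi : ℂ) * Complex.I * (β₁ : ℂ))) ∧
    ((∑ i, (r i : ℂ) * (deriv Θ (x k - y i) / Θ (x k - y i))
        - ∑ j ∈ Finset.univ.erase k, deriv Θ (x k - x j) / Θ (x k - x j)
        = 2 * (Real.pi : ℂ) * Complex.I * (β₁ : ℂ)) ↔
      (deriv (fun t => Complex.exp (2 * (Real.pi : ℂ) * Complex.I * (β₁ : ℂ) * t)
          * (∏ l ∈ Finset.univ.erase k, Θ (t - x l)) / ∏ i, Θ (t - y i) ^ r i)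
        (x k) = 0)) := by
  set a := x k
  set c : ℂ := 2 * (Real.pi : ℂ) * Complex.I * (β₁ : ℂ)
  set ψ : ℂ → ℂ := fun t => Complex.exp (c * t)
    * (∏ l ∈ Finset.univ.erase k, Θ (t - x l)) / ∏ i, Θ (t - y i) ^ r i
  have hΘd : Differentiable ℂ Θ := fun z => (hΘ z).differentiableAt
  have hQ : ∏ i, Θ (a - y i) ^ r i ≠ 0 :=
    Finset.prod_ne_zero_iff.mpr fun i _ => pow_ne_zero _ (hxy i)
  have hψa : ψ a ≠ 0 :=
    div_ne_zero (mul_ne_zero (Complex.exp_ne_zero _) (Finset.prod_ne_zero_iff.mpr hxx)) hQ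
  have hbc : (∑ i, (r i : ℂ) * (deriv Θ (a - y i) / Θ (a - y i))
      - ∑ j ∈ Finset.univ.erase k, deriv Θ (a - x j) / Θ (a - x j) = c) ↔ deriv ψ a = 0 := by
    have hψ' : deriv ψ a = 0 ↔ logDeriv ψ a = 0 := by
      rw [logDeriv_apply, div_eq_zero_iff, or_iff_left hψa]
    rw [hψ', logDeriv_cexp_mul_prod_div_prod _ _ hΘd _ _ _ _ hxx fun i _ => hxy i]
    simp only [logDeriv_apply]
    constructor <;> intro h <;> linear_combination -h
  have hφψ : φ = (fun z => Θ (z - a)) * ψ := by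
    funext z
    simp only [hφ, Pi.mul_apply, ψ, ← Finset.mul_prod_erase _ _ (Finset.mem_univ k)]
    ring
  have hΘodd : Θ.Odd := hodd
  have hΘ2 : ContDiff ℂ 2 Θ := hΘd.contDiff
  have hφ2 : iteratedDeriv 2 φ a = 2 * deriv Θ 0 * deriv ψ a := by
    rw [hφψ, iteratedDeriv_two_mul_of_apply_eq_zero (by fun_prop)
      (by fun_prop (disch := exact hQ)), deriv_comp_sub_const, sub_self]
    · simpa using hΘodd.iteratedDeriv_eq_zero_of_even (n := 0) Even.zero
    · simpa [iteratedDeriv_comp_sub_const] using hΘodd.iteratedDeriv_eq_zero_of_even even_two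
  refine ⟨?_, hbc⟩
  rw [hφ2, hbc, mul_eq_zero, or_iff_right (mul_ne_zero two_ne_zero hΘ')]

/-- Elliptic Stieltjes–Bethe equations: for `φ(z) = e^{2πiβ₁z}∏ⱼΘ(z-xⱼ)/∏ᵢΘ(z-yᵢ)^{rᵢ}`
with `Θ` entire, odd, `Θ'(0) ≠ 0`, the following are equivalent at the simple zero `x_k`:
(a) `φ''(x_k) = 0`; (b) `∑ᵢ rᵢ f(x_k-yᵢ) - ∑_{j≠k} f(x_k-xⱼ) = 2πiβ₁` with `f = Θ'/Θ`;
(c) the derivative at `x_k` of `t ↦ e^{2πiβ₁t}∏_{l≠k}Θ(t-x_l)/∏ᵢΘ(t-yᵢ)^{rᵢ}` vanishes. -/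
theorem stmt_15 (n m : ℕ) (hn : 0 < n) (hm : 0 < m)
    (Θ : ℂ → ℂ) (hΘ : ∀ z : ℂ, AnalyticAt ℂ Θ z)
    (hodd : ∀ z : ℂ, Θ (-z) = -Θ z) (hΘ' : deriv Θ 0 ≠ 0)
    (x : Fin n → ℂ) (y : Fin m → ℂ) (r : Fin m → ℕ) (hr : ∀ i, 0 < r i)
    (β₁ : ℤ)
    (φ : ℂ → ℂ)
    (hφ : φ = fun z => Complex.exp (2 * (Real.pi : ℂ) * Complex.I * (β₁ : ℂ) * z)
      * (∏ j, Θ (z - x j)) / ∏ i, Θ (z - y i) ^ r i)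
    (k : Fin n)
    (hxx : ∀ j ∈ Finset.univ.erase k, Θ (x k - x j) ≠ 0)
    (hxy : ∀ i, Θ (x k - y i) ≠ 0) :
    ((iteratedDeriv 2 φ (x k) = 0) ↔
      (∑ i, (r i : ℂ) * (deriv Θ (x k - y i) / Θ (x k - y i))
        - ∑ j ∈ Finset.univ.erase k, deriv Θ (x k - x j) / Θ (x k - x j)
        = 2 * (Real.pi : ℂ) * Complex.I * (β₁ : ℂ))) ∧
    ((∑ i, (r i : ℂ) * (deriv Θ (x k - y i) / Θ (x k - y i))
        - ∑ j ∈ Finset.univ.erase k, deriv Θ (x k - x j) / Θ (x k - x j)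
        = 2 * (Real.pi : ℂ) * Complex.I * (β₁ : ℂ)) ↔
      (deriv (fun t => Complex.exp (2 * (Real.pi : ℂ) * Complex.I * (β₁ : ℂ) * t)
          * (∏ l ∈ Finset.univ.erase k, Θ (t - x l)) / ∏ i, Θ (t - y i) ^ r i)
        (x k) = 0)) :=
  stmt_15_general n m Θ hΘ hodd hΘ' x y r β₁ φ hφ k hxx hxy
end
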